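/- For every Ω-word u over Ω = {≺, ≻}, there exists a unique normal word [u] such that u = [u] holds in the free L-algebra L(X). -/
import Mathlib


/-- Ω-words for Ω = {≺, ≻}: `p u v` denotes u ≺ v and `s u v` denotes u ≻ v. -/
inductive LW (X : Type) : Type
  | var : X → LW X
  | p : LW X → LW X → LW X
  | s : LW X → LW X → LW X
deriving DecidableEq

namespace LW

variable {X : Type}

/-- number of occurrences of variables, |u|_X -/
def szX : LW X → ℕ
  | var _ => 1
  | p u v => szX u + szX v
  | s u v => szX u + szX v

/-- The weight-lexicographic ordering on Ω-words: wt(x) = (1,x),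
wt(δᵢ(u₁,u₂)) = (|u|_X, δᵢ, u₁, u₂) with ≻ < ≺, compared lexicographically. -/
inductive LLt [LinearOrder X] : LW X → LW X → Prop
  | size {u v : LW X} : szX u < szX v → LLt u v
  | var {x y : X} : x < y → LLt (var x) (var y)
  | sp {u1 u2 v1 v2 : LW X} : szX (s u1 u2) = szX (p v1 v2) → LLt (s u1 u2) (p v1 v2)
  | s1 {u1 u2 v1 v2 : LW X} : szX (s u1 u2) = szX (s v1 v2) → LLt u1 v1 →
      LLt (s u1 u2) (s v1 v2)
  | s2 {u1 u2 v2 : LW X} : szX (s u1 u2) = szX (s u1 v2) → LLt u2 v2 →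
      LLt (s u1 u2) (s u1 v2)
  | p1 {u1 u2 v1 v2 : LW X} : szX (p u1 u2) = szX (p v1 v2) → LLt u1 v1 →
      LLt (p u1 u2) (p v1 v2)
  | p2 {u1 u2 v2 : LW X} : szX (p u1 u2) = szX (p u1 v2) → LLt u2 v2 →
      LLt (p u1 u2) (p u1 v2)

/-- Normal words: x ∈ X is normal; v ≻ w is normal if v, w are; v ≺ w is normal
if v, w are normal and v is not of the form v₁ ≻ v₂. -/
inductive Normal : LW X → Prop
  | var {x : X} : Normal (var x)
  | suc {u v : LW X} : Normal u → Normal v → Normal (s u v)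
  | pre {u v : LW X} : Normal u → Normal v → (∀ a b, u ≠ s a b) → Normal (p u v)

end LW

/-- A ⋆-Ω-word for Ω = {≺,≻}. -/
inductive LCtx (X : Type) : Type
  | hole : LCtx X
  | pL : LCtx X → LW X → LCtx X
  | pR : LW X → LCtx X → LCtx X
  | sL : LCtx X → LW X → LCtx X
  | sR : LW X → LCtx X → LCtx X

/-- Substitution of an Ω-word for ⋆ in a ⋆-Ω-word. -/
def LCtx.subst {X : Type} : LCtx X → LW X → LW X
  | .hole, u => u
  | .pL c w, u => .p (c.subst u) w
  | .pR w c, u => .p w (c.subst u)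
  | .sL c w, u => .s (c.subst u) w
  | .sR w c, u => .s w (c.subst u)
section

variable {X k : Type} [Field k]

/-- The free Ω-algebra k(X,Ω), Ω = {≺,≻}. -/
abbrev LPoly (X k : Type) [Field k] := LW X →₀ k

/-- The s-Ω-word u|_s, extended linearly. -/
noncomputable def applyC (c : LCtx X) (f : LPoly X k) : LPoly X k :=
  Finsupp.mapDomain c.subst f

/-- The Ω-ideal of k(X,Ω) generated by all (x≻y)≺z − x≻(y≺z). -/
noncomputable def LRelId (X k : Type) [Field k] : Submodule k (LPoly X k) :=
  Submodule.span k {g | ∃ (c : LCtx X) (x y z : LW X),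
    g = applyC c (Finsupp.single (.p (.s x y) z) (1 : k)
          - Finsupp.single (.s x (.p y z)) (1 : k))}

/-- The free L-algebra L(X) = k(X,Ω)/Id((x≻y)≺z − x≻(y≺z)). -/
abbrev FreeL (X k : Type) [Field k] := LPoly X k ⧸ LRelId X k

/-- The image of an Ω-word in the free L-algebra. -/
noncomputable def lmk (X k : Type) [Field k] (w : LW X) : FreeL X k :=
  Submodule.Quotient.mk (Finsupp.single w (1 : k))

end
namespace LW
variable {X : Type}

/-- Normalized prefix product: `pr a b` is the normal form of `p a b` when `a`, `b` normal. -/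
def pr : LW X → LW X → LW X
  | .s a b, c => .s a (pr b c)
  | .var x, c => .p (.var x) c
  | .p a b, c => .p (.p a b) c

/-- Normal form function. -/
def nf : LW X → LW X
  | .var x => .var x
  | .s a b => .s (nf a) (nf b)
  | .p a b => pr (nf a) (nf b)

lemma pr_eq_of_not_s {a : LW X} (h : ∀ x y, a ≠ .s x y) (b : LW X) : pr a b = .p a b := by
  cases a with
  | var x => rfl
  | p u v => rfl
  | s u v => exact absurd rfl (h u v)

lemma normal_pr {a b : LW X} (ha : Normal a) (hb : Normal b) : Normal (pr a b) := by
  induction ha with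
  | var => exact .pre .var hb (fun _ _ => nofun)
  | suc h1 h2 ih1 ih2 => exact .suc h1 ih2
  | pre h1 h2 h3 ih1 ih2 => exact .pre (.pre h1 h2 h3) hb (fun _ _ => nofun)

lemma normal_nf (u : LW X) : Normal (nf u) := by
  induction u with
  | var x => exact .var
  | s a b iha ihb => exact .suc iha ihb
  | p a b iha ihb => exact normal_pr iha ihb

lemma nf_eq_of_normal {v : LW X} (h : Normal v) : nf v = v := by
  induction h with
  | var => rfl
  | suc h1 h2 ih1 ih2 => simp [nf, ih1, ih2]
  | pre h1 h2 h3 ih1 ih2 => simp [nf, ih1, ih2, pr_eq_of_not_s h3]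

end LW

namespace LCtx
variable {X : Type}

def comp : LCtx X → LCtx X → LCtx X
  | .hole, d => d
  | .pL c w, d => .pL (c.comp d) w
  | .pR w c, d => .pR w (c.comp d)
  | .sL c w, d => .sL (c.comp d) w
  | .sR w c, d => .sR w (c.comp d)

lemma subst_comp (c d : LCtx X) (u : LW X) :
    (c.comp d).subst u = c.subst (d.subst u) := by
  induction c <;> simp [comp, subst, *]

end LCtx

section Aux
variable {X k : Type} [Field k]

lemma applyC_eq_lmap (c : LCtx X) (f : LPoly X k) :
    applyC c f = Finsupp.lmapDomain k k c.subst f := rfl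

lemma applyC_applyC (c d : LCtx X) (f : LPoly X k) :
    applyC c (applyC d f) = applyC (c.comp d) f := by
  unfold applyC
  rw [← Finsupp.mapDomain_comp]
  congr 1
  funext u
  exact (LCtx.subst_comp c d u).symm

lemma applyC_mem_LRelId (c : LCtx X) {f : LPoly X k} (hf : f ∈ LRelId X k) :
    applyC c f ∈ LRelId X k := by
  induction hf using Submodule.span_induction with
  | mem g hg =>
    obtain ⟨c', x, y, z, rfl⟩ := hg
    exact Submodule.subset_span ⟨c.comp c', x, y, z, applyC_applyC c c' _⟩
  | zero => simp [applyC_eq_lmap]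
  | add a b _ _ iha ihb =>
    rw [applyC_eq_lmap, map_add]
    exact Submodule.add_mem _ iha ihb
  | smul r a _ iha =>
    rw [applyC_eq_lmap, map_smul]
    exact Submodule.smul_mem _ r iha

lemma lmk_eq_iff (u v : LW X) :
    lmk X k u = lmk X k v ↔
      Finsupp.single u (1 : k) - Finsupp.single v (1 : k) ∈ LRelId X k :=
  Submodule.Quotient.eq _

lemma lmk_ctx (c : LCtx X) {u v : LW X} (h : lmk X k u = lmk X k v) :
    lmk X k (c.subst u) = lmk X k (c.subst v) := by
  rw [lmk_eq_iff] at h ⊢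
  have := applyC_mem_LRelId c h
  rw [applyC_eq_lmap, map_sub] at this
  simpa [Finsupp.lmapDomain_apply, Finsupp.mapDomain_single] using this

lemma lmk_rel (x y z : LW X) :
    lmk X k (.p (.s x y) z) = lmk X k (.s x (.p y z)) := by
  rw [lmk_eq_iff]
  refine Submodule.subset_span ⟨.hole, x, y, z, ?_⟩
  show _ = Finsupp.mapDomain id _
  rw [Finsupp.mapDomain_id]

lemma lmk_pr (a b : LW X) : lmk X k (.p a b) = lmk X k (LW.pr a b) := by
  induction a generalizing b with
  | var x => rfl
  | p a1 a2 ih1 ih2 => rfl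
  | s a1 a2 ih1 ih2 =>
    calc lmk X k (.p (.s a1 a2) b) = lmk X k (.s a1 (.p a2 b)) := lmk_rel a1 a2 b
    _ = lmk X k (.s a1 (LW.pr a2 b)) := lmk_ctx (.sR a1 .hole) (ih2 b)
    _ = lmk X k (LW.pr (.s a1 a2) b) := rfl

lemma lmk_nf (u : LW X) : lmk X k u = lmk X k (LW.nf u) := by
  induction u with
  | var x => rfl
  | s a b iha ihb =>
    calc lmk X k (.s a b) = lmk X k (.s (LW.nf a) b) := lmk_ctx (.sL .hole b) iha
    _ = lmk X k (.s (LW.nf a) (LW.nf b)) := lmk_ctx (.sR (LW.nf a) .hole) ihb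
  | p a b iha ihb =>
    calc lmk X k (.p a b) = lmk X k (.p (LW.nf a) b) := lmk_ctx (.pL .hole b) iha
    _ = lmk X k (.p (LW.nf a) (LW.nf b)) := lmk_ctx (.pR (LW.nf a) .hole) ihb
    _ = lmk X k (LW.pr (LW.nf a) (LW.nf b)) := lmk_pr _ _
    _ = lmk X k (LW.nf (.p a b)) := rfl

lemma nf_subst_rel (c : LCtx X) (x y z : LW X) :
    LW.nf (c.subst (.p (.s x y) z)) = LW.nf (c.subst (.s x (.p y z))) := by
  induction c with
  | hole => simp [LCtx.subst, LW.nf, LW.pr]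
  | pL c' w ih => simp [LCtx.subst, LW.nf, ih]
  | pR w c' ih => simp [LCtx.subst, LW.nf, ih]
  | sL c' w ih => simp [LCtx.subst, LW.nf, ih]
  | sR w c' ih => simp [LCtx.subst, LW.nf, ih]

lemma LRelId_le_ker :
    (LRelId X k) ≤ LinearMap.ker (Finsupp.lmapDomain k k (LW.nf (X := X))) := by
  rw [LRelId, Submodule.span_le]
  rintro g ⟨c, x, y, z, rfl⟩
  simp only [SetLike.mem_coe, LinearMap.mem_ker, applyC_eq_lmap, ← map_sub]
  rw [← LinearMap.comp_apply, ← Finsupp.lmapDomain_comp]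
  have hcomp : LW.nf ∘ c.subst = fun u => LW.nf (c.subst u) := rfl
  rw [map_sub]
  simp only [Finsupp.lmapDomain_apply, Finsupp.mapDomain_single, Function.comp_apply]
  rw [nf_subst_rel c x y z, sub_self]

lemma normal_unique {v w : LW X} (hv : LW.Normal v) (hw : LW.Normal w)
    (h : lmk X k v = lmk X k w) : v = w := by
  rw [lmk_eq_iff] at h
  have := LRelId_le_ker h
  rw [LinearMap.mem_ker, map_sub, sub_eq_zero] at this
  simp only [Finsupp.lmapDomain_apply, Finsupp.mapDomain_single] at this
  rw [LW.nf_eq_of_normal hv, LW.nf_eq_of_normal hw] at this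
  have h1 := (Finsupp.single_eq_single_iff _ _ _ _).mp this
  rcases h1 with ⟨h, _⟩ | ⟨h, _⟩
  · exact h
  · exact absurd h one_ne_zero

end Aux

/-- every Ω-word u has a unique normal form: a unique normal word
[u] with u = [u] in the free L-algebra L(X). -/
theorem exists_unique_normal_form (X k : Type) [Field k] (u : LW X) :
    ∃! v : LW X, LW.Normal v ∧ lmk X k u = lmk X k v := by
  refine ⟨LW.nf u, ⟨LW.normal_nf u, lmk_nf u⟩, ?_⟩
  rintro v ⟨hv, he⟩
  exact normal_unique hv (LW.normal_nf u) (he.symm.trans (lmk_nf u))
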